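/- arXiv:1210.3855 — 6 statements merged into one kernel-verified Lean document; each statement's English description precedes it below -/
import Mathlib

section
/- Let R be a Noetherian ring and let 0 → N → M → Q → 0 be a short exact sequence of finitely generated R-modules (i.e., there are R-linear maps i : N → M and p : M → Q with i injective, p surjective, and range i = ker p). Then len_R Q + len_R N ≤ len_R M ≤ len_R Q ♯ len_R N, where + denotes ordinal addition and ♯ the natural (Hessenberg) sum of ordinals. -/
/-!
Pulling back along `p` embeds the submodules of `Q` into those of `M` above `ker p`, and pushing
forward along `i` embeds the submodules of `N` into those below `ker p`; ranks in a well-founded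
poset add up across such a cut, which gives the lower bound. For the upper bound,
`X ↦ (p(X), i⁻¹(X))` is strictly monotone by the modular law, and the rank of a product of
well-founded posets is at most the natural sum of the ranks of the factors.
-/

namespace Ordinal

/-- Natural (Hessenberg) addition of ordinals, as formerly defined in Mathlib. -/
noncomputable def nadd (a b : Ordinal) : Ordinal :=
  max (⨆ x : Set.Iio a, Order.succ (nadd x.1 b)) (⨆ x : Set.Iio b, Order.succ (nadd a x.1))
termination_by (a, b)
decreasing_by all_goals cases x; decreasing_tactic

end Ordinal

namespace NaturalOps

infixl:65 " ♯ " => Ordinal.nadd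

end NaturalOps

open Ordinal NaturalOps

/-- The ordinal length of a Noetherian module: the rank of the zero submodule in the
well-founded order of submodules under reverse inclusion, i.e.
`rank N = sup { rank N' + 1 : N ⊊ N' }` and `len M = rank ⊥`. -/
noncomputable def moduleLength (R M : Type*) [Ring R] [AddCommGroup M] [Module R M]
    [IsNoetherian R M] : Ordinal :=
  IsWellFounded.rank (α := Submodule R M) (· > ·) ⊥

universe u v

namespace Ordinal

theorem nadd_lt_nadd_right {a' a : Ordinal.{u}} (h : a' < a) (b : Ordinal.{u}) :
    (a' ♯ b : Ordinal.{u}) < a ♯ b := by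
  rw [nadd.eq_1 a b]
  exact (Order.lt_succ _).trans_le
    (le_max_of_le_left (Ordinal.le_iSup (fun x : Set.Iio a => Order.succ (x.1 ♯ b)) ⟨a', h⟩))

theorem nadd_lt_nadd_left {b' b : Ordinal.{u}} (h : b' < b) (a : Ordinal.{u}) :
    (a ♯ b' : Ordinal.{u}) < a ♯ b := by
  rw [nadd.eq_1 a b]
  exact (Order.lt_succ _).trans_le
    (le_max_of_le_right (Ordinal.le_iSup (fun x : Set.Iio b => Order.succ (a ♯ x.1)) ⟨b', h⟩))

theorem nadd_le_nadd_right {a' a : Ordinal.{u}} (h : a' ≤ a) (b : Ordinal.{u}) :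
    (a' ♯ b : Ordinal.{u}) ≤ a ♯ b :=
  StrictMono.monotone (fun _ _ h => nadd_lt_nadd_right h b) h

theorem nadd_le_nadd_left {b' b : Ordinal.{u}} (h : b' ≤ b) (a : Ordinal.{u}) :
    (a ♯ b' : Ordinal.{u}) ≤ a ♯ b :=
  StrictMono.monotone (fun _ _ h => nadd_lt_nadd_left h a) h

end Ordinal

section Rank

variable {α β : Type u}

theorem RelHom.rank_le_rank {r : α → α → Prop} {s : β → β → Prop} [IsWellFounded α r]
    [IsWellFounded β s] (f : r →r s) (a : α) :
    IsWellFounded.rank r a ≤ IsWellFounded.rank s (f a) := by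
  induction a using IsWellFounded.induction r with
  | ind a ih =>
    rw [IsWellFounded.rank_eq]
    exact Ordinal.iSup_le fun b =>
      Order.succ_le_of_lt ((ih b b.2).trans_lt (IsWellFounded.rank_lt_of_rel (f.map_rel b.2)))

theorem StrictMono.rank_gt_le [Preorder α] [Preorder β] [WellFoundedGT α] [WellFoundedGT β]
    {f : α → β} (hf : StrictMono f) (a : α) :
    IsWellFounded.rank (α := α) (· > ·) a ≤ IsWellFounded.rank (α := β) (· > ·) (f a) :=
  RelHom.rank_le_rank (⟨f, fun h => hf h⟩ : ((· > ·) : α → α → Prop) →r (· > ·)) a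

theorem WellFoundedGT.rank_prod_le_nadd [PartialOrder α] [PartialOrder β] [WellFoundedGT α]
    [WellFoundedGT β] (x : α × β) :
    IsWellFounded.rank (α := α × β) (· > ·) x ≤
      IsWellFounded.rank (α := α) (· > ·) x.1 ♯
        IsWellFounded.rank (α := β) (· > ·) x.2 := by
  induction x using IsWellFounded.induction (α := α × β) (· > ·) with
  | ind x ih =>
    rw [IsWellFounded.rank_eq]
    refine Ordinal.iSup_le fun ⟨y, hy⟩ => Order.succ_le_of_lt ((ih y hy).trans_lt ?_)
    rcases Prod.lt_iff.mp hy with ⟨h₁, h₂⟩ | ⟨h₁, h₂⟩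
    · exact (nadd_lt_nadd_right (rank_strictAnti h₁) _).trans_le
        (nadd_le_nadd_left (rank_strictAnti.antitone h₂) _)
    · exact (nadd_le_nadd_right (rank_strictAnti.antitone h₁) _).trans_lt
        (nadd_lt_nadd_left (rank_strictAnti h₂) _)

theorem WellFoundedGT.rank_add_rank_Iic_le [PartialOrder α] [WellFoundedGT α] (a : α)
    (b : Set.Iic a) :
    IsWellFounded.rank (α := α) (· > ·) a + IsWellFounded.rank (α := Set.Iic a) (· > ·) b ≤
      IsWellFounded.rank (α := α) (· > ·) b := by
  induction b using IsWellFounded.induction (α := Set.Iic a) (· > ·) with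
  | ind b ih =>
    rw [IsWellFounded.rank_eq (α := Set.Iic a)]
    rcases isEmpty_or_nonempty { b' : Set.Iic a // b' > b } with hmax | hne
    · rw [ciSup_of_empty, Ordinal.bot_eq_zero, add_zero]
      exact rank_strictAnti.antitone b.2
    · rw [Ordinal.add_iSup]
      refine Ordinal.iSup_le fun b' => ?_
      rw [Order.succ_eq_add_one, ← add_assoc, ← Order.succ_eq_add_one]
      exact Order.succ_le_of_lt ((ih b' b'.2).trans_lt (rank_strictAnti b'.2))

end Rank

section ShortExact

open Submodule

variable {R : Type*} {N M Q : Type v} [Ring R] [AddCommGroup N] [AddCommGroup M]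
  [AddCommGroup Q] [Module R N] [Module R M] [Module R Q]

theorem Submodule.strictMono_map_prod_comap_of_range_eq_ker {i : N →ₗ[R] M} {p : M →ₗ[R] Q}
    (hexact : LinearMap.range i = LinearMap.ker p) :
    StrictMono fun X : Submodule R M => (X.map p, X.comap i) := by
  intro X Y hXY
  refine lt_of_le_of_ne ⟨map_mono hXY.le, comap_mono hXY.le⟩ fun hXY' => hXY.ne ?_
  obtain ⟨hmap, hcomap⟩ := Prod.mk.inj hXY'
  -- `X ⊔ ker p` and `X ⊓ range i` are recovered from `X.map p` and `X.comap i`.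
  refine eq_of_le_of_inf_le_of_sup_le (z := LinearMap.ker p) hXY.le ?_ ?_
  · rw [← hexact, inf_comm, inf_comm X, ← map_comap_eq, ← map_comap_eq, hcomap]
  · rw [← comap_map_eq, ← comap_map_eq, hmap]

theorem moduleLength_le_rank_ker [IsNoetherian R M] [IsNoetherian R Q] {p : M →ₗ[R] Q}
    (hp : Function.Surjective p) :
    moduleLength R Q ≤ IsWellFounded.rank (α := Submodule R M) (· > ·) (LinearMap.ker p) :=
  ((comap_strictMono_of_surjective hp).rank_gt_le ⊥).trans_eq (congrArg _ (comap_bot p))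

theorem moduleLength_le_rank_Iic_range [IsNoetherian R N] [IsNoetherian R M] {i : N →ₗ[R] M}
    (hi : Function.Injective i) :
    moduleLength R N ≤ IsWellFounded.rank (α := Set.Iic (LinearMap.range i)) (· > ·) ⊥ := by
  have hmono : StrictMono fun X : Submodule R N =>
      (⟨X.map i, LinearMap.map_le_range⟩ : Set.Iic (LinearMap.range i)) :=
    fun _ _ h => map_strictMono_of_injective hi h
  exact (hmono.rank_gt_le ⊥).trans_eq (congrArg _ (Subtype.ext (map_bot i)))

end ShortExact

/-- Semi-additivity: for a short exact sequence `0 → N → M → Q → 0` of finitely generated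
modules over a Noetherian ring, `len Q + len N ≤ len M ≤ len Q ♯ len N`. -/
theorem moduleLength_semi_additivity
    (R : Type u) [CommRing R] [IsNoetherianRing R]
    (N M Q : Type v) [AddCommGroup N] [AddCommGroup M] [AddCommGroup Q]
    [Module R N] [Module R M] [Module R Q]
    [Module.Finite R N] [Module.Finite R M] [Module.Finite R Q]
    (i : N →ₗ[R] M) (p : M →ₗ[R] Q)
    (hi : Function.Injective i) (hp : Function.Surjective p)
    (hexact : LinearMap.range i = LinearMap.ker p) :
    moduleLength R Q + moduleLength R N ≤ moduleLength R M ∧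
      moduleLength R M ≤ moduleLength R Q ♯ moduleLength R N := by
  constructor
  · calc moduleLength R Q + moduleLength R N
        ≤ IsWellFounded.rank (α := Submodule R M) (· > ·) (LinearMap.ker p) +
            IsWellFounded.rank (α := Set.Iic (LinearMap.ker p)) (· > ·) ⊥ :=
          add_le_add (moduleLength_le_rank_ker hp)
            (hexact ▸ moduleLength_le_rank_Iic_range hi)
      _ ≤ moduleLength R M := WellFoundedGT.rank_add_rank_Iic_le _ ⊥
  · have hbot : ((⊥ : Submodule R M).map p, (⊥ : Submodule R M).comap i) = (⊥, ⊥) := by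
      rw [Submodule.map_bot, Submodule.comap_bot, LinearMap.ker_eq_bot.mpr hi]
    calc moduleLength R M
        ≤ IsWellFounded.rank (α := Submodule R Q × Submodule R N) (· > ·) (⊥, ⊥) :=
          hbot ▸ (Submodule.strictMono_map_prod_comap_of_range_eq_ker hexact).rank_gt_le ⊥
      _ ≤ moduleLength R Q ♯ moduleLength R N := WellFoundedGT.rank_prod_le_nadd _
end

section
/- Let R be a Noetherian ring, M a finitely generated R-module, and N a submodule of M whose ordinal length len_R N is finite (i.e., len_R N < ω). Then len_R M = len_R (M/N) + len_R N, where + is ordinal addition. -/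
/-!
Order the submodules of `M` by reverse inclusion and take ranks. By the correspondence theorem
the rank of `N` is `len (M ⧸ N)`, while the rank of `⊥` is `len M`. In a modular lattice a
covering `a ⋖ b` raises the rank by exactly one, `rank a = rank b + 1`: any `d > a` not above
`b` is covered by `b ⊔ d`, so induction applies. If `len N = n` is finite, `⊥` is joined to `N`
by a chain of `n` coverings, whence `rank ⊥ = rank N + n`.
-/

open Ordinal

universe u v

namespace IsWellFounded

section Preorder

variable {α : Type u} [Preorder α] [WellFoundedGT α]

theorem rank_le_rank_of_strictMono {β : Type u} [Preorder β] [WellFoundedGT β] {f : α → β}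
    (hf : StrictMono f) (a : α) : rank (· > ·) a ≤ rank (· > ·) (f a) := by
  induction a using WellFoundedGT.induction with
  | _ a IH =>
    rw [rank_eq]
    refine Ordinal.iSup_le fun ⟨b, hb⟩ ↦ Order.succ_le_of_lt ?_
    exact (IH b hb).trans_lt (rank_lt_of_rel (hf hb))

theorem rank_orderIso_apply {β : Type u} [Preorder β] [WellFoundedGT β] (e : α ≃o β) (a : α) :
    rank (· > ·) (e a) = rank (· > ·) a := by
  refine le_antisymm ?_ (rank_le_rank_of_strictMono e.strictMono a)
  simpa using rank_le_rank_of_strictMono e.symm.strictMono (e a)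

theorem rank_subtype_of_isUpperSet {s : Set α} (hs : IsUpperSet s) (a : s) :
    rank (· > ·) a = rank (· > ·) (a : α) := by
  refine le_antisymm (rank_le_rank_of_strictMono (Subtype.strictMono_coe (· ∈ s)) a) ?_
  obtain ⟨a, ha⟩ := a
  induction a using WellFoundedGT.induction with
  | _ a IH =>
    rw [rank_eq]
    refine Ordinal.iSup_le fun ⟨b, hb⟩ ↦ Order.succ_le_of_lt ?_
    exact (IH b hb (hs hb.le ha)).trans_lt (rank_lt_of_rel (α := s) (b := ⟨a, ha⟩) hb)

theorem exists_gt_rank_eq_of_rank_eq_succ {a : α} {o : Ordinal} (h : rank (· > ·) a = o + 1) :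
    ∃ b > a, rank (· > ·) b = o := by
  by_contra! hne
  have : rank (· > ·) a ≤ o := by
    rw [rank_eq]
    refine Ordinal.iSup_le fun ⟨b, hb⟩ ↦ Order.succ_le_of_lt ?_
    have hlt : rank (· > ·) b < o + 1 := h ▸ rank_lt_of_rel hb
    exact (Order.lt_succ_iff.mp hlt).lt_of_ne (hne b hb)
  exact (Order.lt_succ o).not_ge (h ▸ this : o + 1 ≤ o)

end Preorder

section ModularLattice

variable {α : Type u} [Lattice α] [IsUpperModularLattice α] [WellFoundedGT α]

theorem rank_eq_rank_add_one_of_covBy {a b : α} (hab : a ⋖ b) :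
    rank (· > ·) a = rank (· > ·) b + 1 := by
  refine le_antisymm ?_ (Order.succ_le_of_lt (rank_lt_of_rel hab.lt))
  induction a using WellFoundedGT.induction generalizing b with
  | _ a IH =>
    rw [rank_eq]
    refine Ordinal.iSup_le fun ⟨d, had⟩ ↦ Order.succ_le_succ ?_
    by_cases hbd : b ≤ d
    · exact WellFoundedGT.rank_strictAnti.antitone hbd
    -- `d` meets `b` in `a`, so modularity makes `b ⊔ d` cover `d`.
    have hinf : b ⊓ d = a :=
      (hab.eq_or_eq (le_inf hab.le had.le) inf_le_left).resolve_right (hbd ∘ inf_eq_left.mp)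
    have hlt : b < b ⊔ d := left_lt_sup.mpr fun hdb ↦ had.ne' (hinf ▸ (inf_eq_right.mpr hdb)).symm
    calc rank (· > ·) d
        ≤ rank (· > ·) (b ⊔ d) + 1 := IH d had (covBy_sup_of_inf_covBy_left (hinf ▸ hab))
      _ ≤ rank (· > ·) b := Order.succ_le_of_lt (rank_lt_of_rel hlt)

theorem rank_coe_eq_rank_add {b : α} {n : ℕ} {x : Set.Iic b} (hx : rank (· > ·) x = n) :
    rank (· > ·) (x : α) = rank (· > ·) b + n := by
  induction n generalizing x with
  | zero =>
    rw [Nat.cast_zero] at hx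
    have hxb : (x : α) = b := x.2.eq_of_not_lt fun hxb ↦
      not_lt_zero (hx ▸ rank_lt_of_rel (show (⟨b, le_rfl⟩ : Set.Iic b) > x from hxb))
    rw [hxb, Nat.cast_zero, add_zero]
  | succ k IH =>
    rw [Nat.cast_succ] at hx
    obtain ⟨y, hxy, hy⟩ := exists_gt_rank_eq_of_rank_eq_succ hx
    have hcov : x ⋖ y := ⟨hxy, fun z hxz hzy ↦ (rank_lt_of_rel (show y > z from hzy)).not_ge <|
      hy ▸ Order.lt_add_one_iff.mp (hx ▸ rank_lt_of_rel (show z > x from hxz))⟩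
    have hcov' : (x : α) ⋖ y := hcov.image (OrderEmbedding.subtype _) <| by
      rw [OrderEmbedding.coe_subtype, Subtype.range_coe]
      exact Set.ordConnected_Iic
    rw [rank_eq_rank_add_one_of_covBy hcov', IH hy, Nat.cast_succ, add_assoc]

end ModularLattice

end IsWellFounded

section Module

variable {R : Type u} [Ring R] {M : Type v} [AddCommGroup M] [Module R M] [IsNoetherian R M]

theorem rank_eq_moduleLength_quotient (N : Submodule R M) :
    IsWellFounded.rank (· > ·) N = moduleLength R (M ⧸ N) := by
  rw [moduleLength, ← IsWellFounded.rank_orderIso_apply N.comapMkQRelIso, OrderIso.map_bot,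
    IsWellFounded.rank_subtype_of_isUpperSet (isUpperSet_Ici N), Set.Ici.coe_bot]

theorem moduleLength_eq_rank_Iic (N : Submodule R M) :
    moduleLength R N = IsWellFounded.rank (· > ·) (⊥ : Set.Iic N) := by
  rw [moduleLength, ← IsWellFounded.rank_orderIso_apply N.mapIic, OrderIso.map_bot]

end Module

/-- If `N ⊆ M` has finite ordinal length, then `len M = len (M/N) + len N`. -/
theorem moduleLength_eq_quotient_add
    (R : Type u) [CommRing R] [IsNoetherianRing R]
    (M : Type v) [AddCommGroup M] [Module R M] [Module.Finite R M]
    (N : Submodule R M) (hN : moduleLength R N < ω) :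
    moduleLength R M = moduleLength R (M ⧸ N) + moduleLength R N := by
  obtain ⟨n, hn⟩ := Ordinal.lt_omega0.mp hN
  have hbot : IsWellFounded.rank (· > ·) (⊥ : Set.Iic N) = n := by
    rw [← moduleLength_eq_rank_Iic, hn]
  calc moduleLength R M = IsWellFounded.rank (· > ·) (⊥ : Submodule R M) := rfl
    _ = IsWellFounded.rank (· > ·) N + n := IsWellFounded.rank_coe_eq_rank_add hbot
    _ = moduleLength R (M ⧸ N) + moduleLength R N := by rw [rank_eq_moduleLength_quotient, hn]
end

section
/- Let R be a Noetherian ring, x ∈ R a non-zerodivisor, and I ⊆ R an arbitrary ideal. Then len(R/xR) + len(R/I) ≤ len(R/xI), where xI denotes the product ideal (x)·I, the lengths are ordinal lengths of these quotients as R-modules, and + is ordinal addition. -/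
open Ordinal

universe u

section Aux

/-- Rank is monotone along maps that strictly preserve the relation. -/
lemma rank_le_of_relMap {α β : Type u} {r : α → α → Prop} {s : β → β → Prop}
    [IsWellFounded α r] [IsWellFounded β s]
    (f : α → β) (hf : ∀ a b, r a b → s (f a) (f b)) (a : α) :
    IsWellFounded.rank r a ≤ IsWellFounded.rank s (f a) := by
  induction a using IsWellFounded.induction r with
  | _ a IH =>
    rw [IsWellFounded.rank_eq]
    refine Ordinal.iSup_le ?_
    rintro ⟨b, hb⟩
    exact (Order.succ_le_succ (IH b hb)).trans
      (Order.succ_le_of_lt (IsWellFounded.rank_lt_of_rel (hf b a hb)))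

variable {R : Type u} [Ring R]

/-- Module length is invariant under linear equivalence. -/
lemma moduleLength_eq_of_linearEquiv {M M' : Type u}
    [AddCommGroup M] [Module R M] [IsNoetherian R M]
    [AddCommGroup M'] [Module R M'] [IsNoetherian R M']
    (e : M ≃ₗ[R] M') : moduleLength R M = moduleLength R M' := by
  have h1 : ∀ (A B : Submodule R M), A > B → A.map (e : M →ₗ[R] M') > B.map (e : M →ₗ[R] M') :=
    fun A B hAB => Submodule.map_strictMono_of_injective e.injective hAB
  have h2 : ∀ (A B : Submodule R M'), A > B →
      A.map (e.symm : M' →ₗ[R] M) > B.map (e.symm : M' →ₗ[R] M) :=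
    fun A B hAB => Submodule.map_strictMono_of_injective e.symm.injective hAB
  apply le_antisymm
  · have := rank_le_of_relMap (r := ((· > ·) : Submodule R M → Submodule R M → Prop))
      (s := ((· > ·) : Submodule R M' → Submodule R M' → Prop))
      (fun P => P.map (e : M →ₗ[R] M')) h1 ⊥
    rwa [Submodule.map_bot] at this
  · have := rank_le_of_relMap (r := ((· > ·) : Submodule R M' → Submodule R M' → Prop))
      (s := ((· > ·) : Submodule R M → Submodule R M → Prop))
      (fun P => P.map (e.symm : M' →ₗ[R] M)) h2 ⊥
    rwa [Submodule.map_bot] at this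

/-- Subadditivity of module length: `len (M/N) + len N ≤ len M`. -/
lemma moduleLength_quotient_add_le {M : Type u}
    [AddCommGroup M] [Module R M] [IsNoetherian R M] (N : Submodule R M) :
    moduleLength R (M ⧸ N) + moduleLength R N ≤ moduleLength R M := by
  set c : Ordinal := IsWellFounded.rank (α := Submodule R M) (· > ·) N with hc_def
  -- `len (M/N) ≤ rank N`
  have hcomap : ∀ (A B : Submodule R (M ⧸ N)), A > B →
      A.comap N.mkQ > B.comap N.mkQ :=
    fun A B h => Submodule.comap_strictMono_of_surjective (Submodule.mkQ_surjective N) h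
  have hquot : moduleLength R (M ⧸ N) ≤ c := by
    have := rank_le_of_relMap (r := ((· > ·) : Submodule R (M ⧸ N) → _ → Prop))
      (s := ((· > ·) : Submodule R M → _ → Prop))
      (fun P => P.comap N.mkQ) hcomap ⊥
    rwa [Submodule.comap_bot, Submodule.ker_mkQ] at this
  -- the key induction
  have key : ∀ P : Submodule R N,
      c + IsWellFounded.rank (α := Submodule R N) (· > ·) P ≤
        IsWellFounded.rank (α := Submodule R M) (· > ·) (P.map N.subtype) := by
    intro P
    induction P using IsWellFounded.induction ((· > ·) : Submodule R N → _ → Prop) with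
    | _ P IH =>
      have hle : c ≤ IsWellFounded.rank (α := Submodule R M) (· > ·) (P.map N.subtype) := by
        rcases eq_or_lt_of_le (Submodule.map_subtype_le N P) with h | h
        · exact (congrArg (IsWellFounded.rank (α := Submodule R M) (· > ·)) h.symm).le
        · exact le_of_lt (IsWellFounded.rank_lt_of_rel h)
      refine (Ordinal.le_sub_of_le hle).mp ?_
      rw [IsWellFounded.rank_eq]
      refine Ordinal.iSup_le ?_
      rintro ⟨Q, hQ⟩
      refine (Ordinal.le_sub_of_le hle).mpr ?_
      rw [Ordinal.add_succ]
      refine Order.succ_le_of_lt (lt_of_le_of_lt (IH Q hQ) ?_)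
      exact IsWellFounded.rank_lt_of_rel
        (Submodule.map_strictMono_of_injective (Submodule.injective_subtype N) hQ)
  have h0 := key ⊥
  rw [Submodule.map_bot] at h0
  calc moduleLength R (M ⧸ N) + moduleLength R N
      ≤ c + moduleLength R N := add_le_add_left hquot _
    _ ≤ moduleLength R M := h0

end Aux

/-- If `x` is a non-zerodivisor of a Noetherian ring `R` and `I` an ideal, then
`len (R/xR) + len (R/I) ≤ len (R/xI)`. -/
theorem moduleLength_quotient_mul
    (R : Type u) [CommRing R] [IsNoetherianRing R]
    (x : R) (hx : x ∈ nonZeroDivisors R) (I : Ideal R) :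
    moduleLength R (R ⧸ Ideal.span {x}) + moduleLength R (R ⧸ I) ≤
      moduleLength R (R ⧸ (Ideal.span {x} * I)) := by
  set J : Ideal R := Ideal.span {x} * I with hJ
  have hJle : J ≤ Ideal.span {x} := Ideal.mul_le_left
  set N : Submodule R (R ⧸ J) := Submodule.map (Submodule.mkQ J) (Ideal.span {x} : Submodule R R) with hN
  -- third isomorphism theorem: (R/J)/N ≃ R/span{x}
  have e1 : ((R ⧸ J) ⧸ N) ≃ₗ[R] R ⧸ Ideal.span {x} :=
    Submodule.quotientQuotientEquivQuotient (J : Submodule R R) (Ideal.span {x}) hJle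
  -- N ≃ R/I via multiplication by x
  let φ : R →ₗ[R] R ⧸ J := (Submodule.mkQ (J : Submodule R R)).comp (LinearMap.toSpanSingleton R R x)
  have hker : LinearMap.ker φ = (I : Submodule R R) := by
    ext r
    simp only [φ, LinearMap.mem_ker, LinearMap.comp_apply, LinearMap.toSpanSingleton_apply,
      Submodule.mkQ_apply, Submodule.Quotient.mk_eq_zero]
    constructor
    · intro h
      have h' : r • x ∈ Ideal.span {x} * I := h
      rw [Ideal.mem_span_singleton_mul] at h'
      obtain ⟨z, hz, hzx⟩ := h'
      have : x * z = x * r := by rw [hzx]; rw [_root_.smul_eq_mul, mul_comm]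
      have hr : z = r := by
        have := mul_cancel_left_mem_nonZeroDivisors hx |>.mp this
        exact this
      rwa [← hr]
    · intro h
      have : x * r ∈ Ideal.span {x} * I :=
        Ideal.mul_mem_mul (Ideal.mem_span_singleton_self x) h
      rwa [_root_.smul_eq_mul, mul_comm]
  have hrange : LinearMap.range φ = N := by
    rw [hN]
    have : LinearMap.range (LinearMap.toSpanSingleton R R x) = Ideal.span {x} := by
      rw [← LinearMap.span_singleton_eq_range]
    rw [show φ = (Submodule.mkQ (J : Submodule R R)).comp (LinearMap.toSpanSingleton R R x)
      from rfl, LinearMap.range_comp, this]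
  have e2 : (R ⧸ I) ≃ₗ[R] N :=
    (Submodule.quotEquivOfEq (I : Submodule R R) (LinearMap.ker φ) hker.symm).trans
      ((φ.quotKerEquivRange).trans (LinearEquiv.ofEq _ _ hrange))
  have h1 : moduleLength R (R ⧸ Ideal.span {x}) = moduleLength R ((R ⧸ J) ⧸ N) :=
    (moduleLength_eq_of_linearEquiv e1).symm
  have h2 : moduleLength R (R ⧸ I) = moduleLength R N :=
    moduleLength_eq_of_linearEquiv e2
  rw [h1, h2]
  exact moduleLength_quotient_add_le N
end

section
/- Let R be a Noetherian ring, M and N finitely generated R-modules, and f : M → N a surjective R-linear map. If len_R M ≤ len_R N, then f is an isomorphism and len_R M = len_R N. (In particular, taking N = M, every surjective endomorphism of a finitely generated module over a Noetherian ring is an isomorphism.) -/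
/-!
Pulling back along the surjection `f` is a strict embedding of the submodules of `N`, ordered by
reverse inclusion, into those of `M`, sending `⊥` to `ker f`; ranks can only grow along such a
map, so `len N ≤ rank (ker f)`. If `ker f ≠ ⊥` then `rank (ker f) < rank ⊥ = len M`, which is
impossible when `len M ≤ len N`.
-/

open Ordinal

universe u v

theorem IsWellFounded.rank_le_rank_of_map {α β : Type u} {r : α → α → Prop}
    {s : β → β → Prop} [IsWellFounded α r] [IsWellFounded β s] (g : α → β)
    (hg : ∀ ⦃a b⦄, r a b → s (g a) (g b)) (a : α) :
    rank r a ≤ rank s (g a) := by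
  induction a using IsWellFounded.induction r with
  | ind a ih =>
    rw [rank_eq]
    refine Ordinal.iSup_le fun ⟨b, hb⟩ => Order.succ_le_of_lt ?_
    exact (ih b hb).trans_lt (rank_lt_of_rel (hg hb))

section

variable {R : Type u} [Ring R] {M N : Type v} [AddCommGroup M] [AddCommGroup N]
  [Module R M] [Module R N] [IsNoetherian R M] [IsNoetherian R N]

theorem moduleLength_le_rank_ker_of_surjective {f : M →ₗ[R] N} (hf : Function.Surjective f) :
    moduleLength R N ≤ IsWellFounded.rank (α := Submodule R M) (· > ·) (LinearMap.ker f) := by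
  rw [← Submodule.comap_bot]
  exact IsWellFounded.rank_le_rank_of_map (r := (· > ·)) (s := (· > ·)) (Submodule.comap f)
    (fun _ _ h ↦ Submodule.comap_strictMono_of_surjective hf h) ⊥

theorem rank_lt_moduleLength_of_ne_bot {p : Submodule R M} (hp : p ≠ ⊥) :
    IsWellFounded.rank (α := Submodule R M) (· > ·) p < moduleLength R M :=
  IsWellFounded.rank_lt_of_rel (bot_lt_iff_ne_bot.2 hp)

end

/-- A surjective linear map `f : M → N` of finitely generated modules over a Noetherian ring
with `len M ≤ len N` is an isomorphism, and then `len M = len N`. -/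
theorem bijective_of_surjective_of_moduleLength_le
    (R : Type u) [CommRing R] [IsNoetherianRing R]
    (M N : Type v) [AddCommGroup M] [AddCommGroup N] [Module R M] [Module R N]
    [Module.Finite R M] [Module.Finite R N]
    (f : M →ₗ[R] N) (hf : Function.Surjective f)
    (hlen : moduleLength R M ≤ moduleLength R N) :
    Function.Bijective f ∧ moduleLength R M = moduleLength R N := by
  have hN := moduleLength_le_rank_ker_of_surjective hf
  have hker : LinearMap.ker f = ⊥ := by
    by_contra h
    exact (hlen.trans hN).not_gt (rank_lt_moduleLength_of_ne_bot h)
  refine ⟨⟨LinearMap.ker_eq_bot.1 hker, hf⟩, hlen.antisymm ?_⟩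
  rwa [hker] at hN
end

section
/- Let R be a Noetherian ring and M, N finitely generated R-modules. If there exist a surjective R-linear map M → N and an injective R-linear map M → N (i.e., N is a homomorphic image of M and contains a submodule isomorphic to M), then M and N are isomorphic as R-modules. -/
universe u v

theorem linearEquiv_of_surjective_of_injective_general
    (R : Type u) [CommRing R]
    (M N : Type v) [AddCommGroup M] [AddCommGroup N] [Module R M] [Module R N]
    [Module.Finite R N]
    (f : M →ₗ[R] N) (hf : Function.Surjective f)
    (g : M →ₗ[R] N) (hg : Function.Injective g) :
    Nonempty (M ≃ₗ[R] N) :=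
  ⟨.ofBijective f (OrzechProperty.bijective_of_surjective_of_injective g f hg hf)⟩

/-- If `N` is both a homomorphic image of `M` and contains a submodule isomorphic to `M`
(for `M`, `N` finitely generated over a Noetherian ring), then `M ≅ N`. -/
theorem linearEquiv_of_surjective_of_injective
    (R : Type u) [CommRing R] [IsNoetherianRing R]
    (M N : Type v) [AddCommGroup M] [AddCommGroup N] [Module R M] [Module R N]
    [Module.Finite R M] [Module.Finite R N]
    (f : M →ₗ[R] N) (hf : Function.Surjective f)
    (g : M →ₗ[R] N) (hg : Function.Injective g) :
    Nonempty (M ≃ₗ[R] N) :=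
  linearEquiv_of_surjective_of_injective_general R M N f hf g hg
end

section
/- Let R be a Noetherian ring and M, N, C finitely generated R-modules. Suppose f : M → N and g : N → C are R-linear maps with g surjective and range f = ker g (i.e., the sequence M → N → C → 0 is exact). If N is isomorphic as an R-module to the direct sum M × C, then the sequence is split exact: f is injective and there exists an R-linear map s : C → N with g ∘ s = id_C. -/
/-!
For modules of finite length the theorem is a length count: `N ≅ M × C` forces `f` to be
injective, and then `Hom(C, -)` turns `0 → M → N → C` into a left exact sequence in which
`length Hom(C, N) = length Hom(C, M) + length Hom(C, C)`, so `g ∘ - : Hom(C, N) → Hom(C, C)` is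
onto and `id_C` lifts.

In general, present `C` as `R^d' →w R^d →π C → 0`. A section of `g` is the same as a map
`ℓ : R^d → N` with `g ∘ ℓ = π` and `ℓ ∘ w = 0`, i.e. `(π, 0)` lies in the image of a linear map
between finitely generated modules. By Krull's intersection theorem this can be checked modulo
`m ^ n` for all maximal ideals `m`. Base change to `R ⧸ m ^ n` is right exact, keeps
`N ≅ M × C` and produces modules of finite length, so the first case gives a section there,
which lifts to the required `ℓ` modulo `m ^ n` because `R^d` is free.

Once `g` has a section `s`, the map `M × C → N` given by `f` and `s` is onto; composed with
`N ≅ M × C` it is a surjective endomorphism of a finitely generated module, hence injective, and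
so is `f`.
-/

universe u v

open Function TensorProduct

section FiniteLength

variable {R : Type*} [CommRing R]

instance isArtinian_linearMap {M N : Type*} [AddCommGroup M] [AddCommGroup N] [Module R M]
    [Module R N] [IsArtinian R M] [Module.Finite R N] : IsArtinian R (N →ₗ[R] M) := by
  obtain ⟨n, f, hf⟩ := Module.Finite.exists_fin' R N
  have : IsArtinian R ((Fin n → R) →ₗ[R] M) :=
    isArtinian_of_linearEquiv (Module.piEquiv (Fin n) R M)
  exact isArtinian_of_injective ((LinearMap.llcomp R (Fin n → R) N M).flip f)
    hf.injective_linearMapComp_right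

variable {A B C : Type*} [AddCommGroup A] [AddCommGroup B] [AddCommGroup C]
  [Module R A] [Module R B] [Module R C]

theorem LinearMap.length_ker_add_length_range (φ : A →ₗ[R] B) :
    Module.length R (LinearMap.ker φ) + Module.length R (LinearMap.range φ) =
      Module.length R A :=
  (Module.length_eq_add_of_exact _ φ.rangeRestrict (LinearMap.ker φ).injective_subtype
    φ.surjective_rangeRestrict (LinearMap.exact_iff.mpr (by simp))).symm

theorem LinearMap.exact_compRight_of_exact_of_injective (X : Type*) [AddCommGroup X]
    [Module R X] {f : A →ₗ[R] B} {g : B →ₗ[R] C} (hfg : Exact f g) (hf : Injective f) :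
    Exact (f.compRight R (M := X)) (g.compRight R (M := X)) := by
  intro s
  refine ⟨fun hs ↦ ?_, ?_⟩
  · have hsf : ∀ x, s x ∈ LinearMap.range f := fun x ↦
      (LinearMap.exact_iff.mp hfg) ▸ LinearMap.congr_fun hs x
    refine ⟨(LinearEquiv.ofInjective f hf).symm ∘ₗ s.codRestrict _ hsf, ?_⟩
    ext x
    simp
  · rintro ⟨t, rfl⟩
    ext x
    exact hfg.apply_apply_eq_zero (t x)

variable [IsNoetherian R A] [IsArtinian R A] [IsNoetherian R C] [IsArtinian R C]
  {f : A →ₗ[R] B} {g : B →ₗ[R] C}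

theorem Function.Exact.injective_of_equiv_prod_of_finiteLength (hfg : Exact f g)
    (hg : Surjective g) (e : B ≃ₗ[R] A × C) : Injective f := by
  have hA := f.length_ker_add_length_range
  have hB := g.length_ker_add_length_range
  rw [LinearMap.exact_iff.mp hfg, LinearMap.range_eq_top.mpr hg, Module.length_top,
    e.length_eq, Module.length_prod, ← hA, add_assoc] at hB
  have hker : Module.length R (LinearMap.ker f) = 0 :=
    (WithTop.add_right_cancel (WithTop.add_ne_top.mpr ⟨Module.length_ne_top,
      Module.length_ne_top⟩) ((zero_add _).trans hB)).symm
  have := Module.length_eq_zero_iff.mp hker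
  exact LinearMap.ker_eq_bot.mp Submodule.eq_bot_of_subsingleton

theorem Function.Exact.exists_comp_eq_id_of_equiv_prod_of_finiteLength [IsNoetherian R B]
    [IsArtinian R B] (hfg : Exact f g) (hg : Surjective g) (e : B ≃ₗ[R] A × C) :
    ∃ s : C →ₗ[R] B, g ∘ₗ s = LinearMap.id := by
  have hf := hfg.injective_of_equiv_prod_of_finiteLength hg e
  let φ : (C →ₗ[R] A) →ₗ[R] C →ₗ[R] B := f.compRight R
  let ψ : (C →ₗ[R] B) →ₗ[R] C →ₗ[R] C := g.compRight R
  have hφψ : Exact φ ψ := LinearMap.exact_compRight_of_exact_of_injective C hfg hf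
  have hφ : Injective φ := fun s t h ↦ LinearMap.ext fun x ↦ hf (LinearMap.congr_fun h x)
  have hlen := ψ.length_ker_add_length_range
  rw [LinearMap.exact_iff.mp hφψ, (LinearEquiv.ofInjective φ hφ).symm.length_eq,
    ((LinearEquiv.refl R C).arrowCongr e ≪≫ₗ (LinearMap.prodEquiv R).symm).length_eq,
    Module.length_prod] at hlen
  have hψ : LinearMap.range ψ = ⊤ := by
    by_contra hne
    exact (Submodule.length_lt hne).ne (WithTop.add_left_cancel Module.length_ne_top hlen)
  obtain ⟨s, hs⟩ := LinearMap.range_eq_top.mp hψ LinearMap.id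
  exact ⟨s, hs⟩

end FiniteLength

section Reduction

variable {R : Type*} [CommRing R]

theorem Ideal.isArtinianRing_quotient_pow [IsNoetherianRing R] (m : Ideal R) [hm : m.IsMaximal]
    (n : ℕ) : IsArtinianRing (R ⧸ m ^ n) := by
  have : Ring.KrullDimLE 0 (R ⧸ m ^ n) :=
    Ideal.krullDimLE_zero_quotient_iff_forall_minimalPrimes_isMaximal.mpr fun J hJ ↦ by
      have := hJ.1.1
      rwa [← hm.eq_of_le this.ne_top (this.le_of_pow_le hJ.1.2)]
  exact IsNoetherianRing.isArtinianRing_of_krullDimLE_zero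

instance isArtinian_quotient_tensorProduct (I : Ideal R) [IsArtinianRing (R ⧸ I)] (M : Type*)
    [AddCommGroup M] [Module R M] [Module.Finite R M] : IsArtinian R ((R ⧸ I) ⊗[R] M) :=
  isArtinian_of_surjective_algebraMap (Ideal.Quotient.mk_surjective (I := I))

variable {M : Type*} [AddCommGroup M] [Module R M]

theorem eq_zero_of_forall_isMaximal_mem_pow_smul_top [IsNoetherianRing R] [Module.Finite R M]
    {x : M} (h : ∀ m : Ideal R, m.IsMaximal → ∀ n : ℕ, x ∈ m ^ n • (⊤ : Submodule R M)) :
    x = 0 := by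
  by_contra hx
  obtain ⟨m, hm, hle⟩ := Ideal.exists_le_maximal
    (LinearMap.ker (LinearMap.toSpanSingleton R M x)) (by simpa [Ideal.eq_top_iff_one] using hx)
  obtain ⟨r, hr⟩ := (m.mem_iInf_smul_pow_eq_bot_iff x).mp (Submodule.mem_iInf _ |>.mpr (h m hm))
  have : 1 - (r : R) ∈ m := hle (by simp [sub_smul, hr])
  exact hm.ne_top ((Ideal.eq_top_iff_one m).mpr (by simpa using m.add_mem this r.2))

theorem Submodule.mem_of_forall_isMaximal_mem_sup_pow_smul_top [IsNoetherianRing R]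
    [Module.Finite R M] {V : Submodule R M} {x : M}
    (h : ∀ m : Ideal R, m.IsMaximal → ∀ n : ℕ, x ∈ V ⊔ m ^ n • (⊤ : Submodule R M)) :
    x ∈ V := by
  rw [← Submodule.Quotient.mk_eq_zero]
  refine eq_zero_of_forall_isMaximal_mem_pow_smul_top (R := R) fun m hm n ↦ ?_
  have hle : V ⊔ m ^ n • ⊤ ≤ (m ^ n • ⊤ : Submodule R (M ⧸ V)).comap V.mkQ :=
    sup_le (fun y hy ↦ by simp [(Submodule.Quotient.mk_eq_zero V).mpr hy])
      (Submodule.smul_top_le_comap_smul_top _ _)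
  exact hle (h m hm n)

theorem TensorProduct.ker_mk_one_quotient (I : Ideal R) :
    LinearMap.ker (TensorProduct.mk R (R ⧸ I) M 1) = I • ⊤ := by
  rw [← quotTensorEquivQuotSMul_symm_comp_mkQ, LinearEquiv.ker_comp, Submodule.ker_mkQ]

theorem TensorProduct.mk_one_quotient_surjective (I : Ideal R) :
    Surjective (TensorProduct.mk R (R ⧸ I) M 1) := by
  rw [← quotTensorEquivQuotSMul_symm_comp_mkQ, LinearMap.coe_comp]
  exact (LinearEquiv.surjective _).comp (Submodule.mkQ_surjective _)

theorem LinearMap.mem_smul_top_of_forall_apply_mem {ι : Type*} [Fintype ι] (I : Ideal R)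
    (φ : (ι → R) →ₗ[R] M) (h : ∀ x, φ x ∈ I • (⊤ : Submodule R M)) :
    φ ∈ I • (⊤ : Submodule R ((ι → R) →ₗ[R] M)) := by
  classical
  have hφ : φ = ∑ i, LinearMap.smulRightₗ (LinearMap.proj i) (φ (Pi.single i 1)) := by
    ext i
    simp [Pi.single_apply]
  rw [hφ]
  exact Submodule.sum_mem _ fun i _ ↦ Submodule.smul_top_le_comap_smul_top I _ (h _)

variable {N C : Type*} [AddCommGroup N] [AddCommGroup C] [Module R N] [Module R C]

theorem exists_lift_of_lTensor_comp_eq_id (I : Ideal R) {g : N →ₗ[R] C}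
    {sb : (R ⧸ I) ⊗[R] C →ₗ[R] (R ⧸ I) ⊗[R] N} (hsb : g.lTensor (R ⧸ I) ∘ₗ sb = LinearMap.id)
    {P P' : Type*} [AddCommGroup P] [AddCommGroup P'] [Module R P] [Module R P']
    [Module.Projective R P] (π : P →ₗ[R] C) (w : P' →ₗ[R] P) (hπw : π ∘ₗ w = 0) :
    ∃ ℓ : P →ₗ[R] N, (∀ x, g (ℓ x) - π x ∈ I • (⊤ : Submodule R C)) ∧
      ∀ y, ℓ (w y) ∈ I • (⊤ : Submodule R N) := by
  obtain ⟨ℓ, hℓ⟩ := Module.projective_lifting_property (TensorProduct.mk R (R ⧸ I) N 1)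
    (sb ∘ₗ TensorProduct.mk R (R ⧸ I) C 1 ∘ₗ π) (TensorProduct.mk_one_quotient_surjective I)
  refine ⟨ℓ, fun x ↦ ?_, fun y ↦ ?_⟩
  · rw [← TensorProduct.ker_mk_one_quotient, LinearMap.mem_ker, map_sub, sub_eq_zero]
    calc (1 : R ⧸ I) ⊗ₜ g (ℓ x) = g.lTensor _ (1 ⊗ₜ ℓ x) := rfl
      _ = g.lTensor _ (sb (1 ⊗ₜ π x)) := congrArg _ (LinearMap.congr_fun hℓ x)
      _ = 1 ⊗ₜ π x := LinearMap.congr_fun hsb _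
  · rw [← TensorProduct.ker_mk_one_quotient, LinearMap.mem_ker]
    calc (1 : R ⧸ I) ⊗ₜ ℓ (w y) = sb (1 ⊗ₜ π (w y)) := LinearMap.congr_fun hℓ (w y)
      _ = 0 := by
        rw [← LinearMap.comp_apply π w, hπw, LinearMap.zero_apply, tmul_zero, map_zero]

theorem Function.Exact.exists_comp_eq_id_of_equiv_prod [IsNoetherianRing R] [Module.Finite R M]
    [Module.Finite R N] [Module.Finite R C] {f : M →ₗ[R] N} {g : N →ₗ[R] C} (hfg : Exact f g)
    (hg : Surjective g) (e : N ≃ₗ[R] M × C) : ∃ s : C →ₗ[R] N, g ∘ₗ s = LinearMap.id := by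
  have := Module.finitePresentation_of_finite R C
  obtain ⟨d, d', π, w, hπ, hwπ⟩ := Module.FinitePresentation.exists_fin' R C
  suffices ∃ ℓ : (Fin d → R) →ₗ[R] N, g ∘ₗ ℓ = π ∧ ℓ ∘ₗ w = 0 by
    obtain ⟨ℓ, hgℓ, hℓw⟩ := this
    obtain ⟨s, rfl⟩ := (LinearMap.exact_lcomp_of_exact_of_surjective N hwπ hπ ℓ).mp hℓw
    exact ⟨s, (LinearMap.cancel_right hπ).mp hgℓ⟩
  let Γ : ((Fin d → R) →ₗ[R] N) →ₗ[R] ((Fin d → R) →ₗ[R] C) × ((Fin d' → R) →ₗ[R] N) :=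
    (g.compRight R).prod (LinearMap.lcomp R N w)
  obtain ⟨ℓ, hℓ⟩ : (π, 0) ∈ LinearMap.range Γ := by
    refine Submodule.mem_of_forall_isMaximal_mem_sup_pow_smul_top fun m hm n ↦ ?_
    have := m.isArtinianRing_quotient_pow n
    obtain ⟨sb, hsb⟩ :=
      (lTensor_exact (R ⧸ m ^ n) hfg hg).exists_comp_eq_id_of_equiv_prod_of_finiteLength
        (LinearMap.lTensor_surjective _ hg) (e.lTensor _ ≪≫ₗ prodRight R R _ M C)
    obtain ⟨ℓ, hgℓ, hℓw⟩ :=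
      exists_lift_of_lTensor_comp_eq_id (m ^ n) hsb π w hwπ.linearMap_comp_eq_zero
    have hΓ : (π, 0) = Γ ℓ + (LinearMap.inl R _ _ (π - g ∘ₗ ℓ) +
        LinearMap.inr R _ _ (-(ℓ ∘ₗ w))) := by
      ext <;> simp [Γ]
    rw [hΓ]
    refine Submodule.add_mem_sup (LinearMap.mem_range_self Γ ℓ) (Submodule.add_mem _ ?_ ?_)
    · refine Submodule.smul_top_le_comap_smul_top _ _
        (LinearMap.mem_smul_top_of_forall_apply_mem _ _ fun x ↦ ?_)
      simpa using neg_mem (hgℓ x)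
    · refine Submodule.smul_top_le_comap_smul_top _ _
        (LinearMap.mem_smul_top_of_forall_apply_mem _ _ fun y ↦ ?_)
      simpa using neg_mem (hℓw y)
  exact ⟨ℓ, congrArg Prod.fst hℓ, congrArg Prod.snd hℓ⟩

theorem Function.Exact.injective_of_comp_eq_id_of_equiv_prod [Module.Finite R M]
    [Module.Finite R C] {f : M →ₗ[R] N} {g : N →ₗ[R] C} (hfg : Exact f g) {s : C →ₗ[R] N}
    (hs : g ∘ₗ s = LinearMap.id) (e : N ≃ₗ[R] M × C) : Injective f := by
  have hsurj : Surjective (f.coprod s) := fun y ↦ by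
    obtain ⟨x, hx⟩ := (hfg (y - s (g y))).mp <| by
      rw [map_sub, sub_eq_zero]
      exact (LinearMap.congr_fun hs (g y)).symm
    exact ⟨(x, g y), by simp [hx]⟩
  have hinj : Injective (f.coprod s) := Injective.of_comp (f := e) <|
    OrzechProperty.injective_of_surjective_endomorphism (e.toLinearMap ∘ₗ f.coprod s)
      (e.surjective.comp hsurj)
  intro a b hab
  exact congrArg Prod.fst (@hinj (a, 0) (b, 0) (by simpa using hab))

end Reduction

/-- Miyata's theorem (generalized): an exact sequence `M → N → C → 0` of finitely generated
modules over a Noetherian ring with `N ≅ M × C` is split exact: the first map is injective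
and the second admits a linear section. -/
theorem splitExact_of_equiv_prod
    (R : Type u) [CommRing R] [IsNoetherianRing R]
    (M N C : Type v) [AddCommGroup M] [AddCommGroup N] [AddCommGroup C]
    [Module R M] [Module R N] [Module R C]
    [Module.Finite R M] [Module.Finite R N] [Module.Finite R C]
    (f : M →ₗ[R] N) (g : N →ₗ[R] C)
    (hg : Function.Surjective g) (hexact : LinearMap.range f = LinearMap.ker g)
    (hiso : Nonempty (N ≃ₗ[R] (M × C))) :
    Function.Injective f ∧ ∃ s : C →ₗ[R] N, g ∘ₗ s = LinearMap.id := by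
  obtain ⟨e⟩ := hiso
  have hfg : Exact f g := LinearMap.exact_iff.mpr hexact.symm
  obtain ⟨s, hs⟩ := hfg.exists_comp_eq_id_of_equiv_prod hg e
  exact ⟨hfg.injective_of_comp_eq_id_of_equiv_prod hs e, s, hs⟩
end
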